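/- (Theorem S1, identification of the counterfactual control mean among the treated.) Assume e := P(Z=1) > 0. Under the sensitivity parametrization, E[Y(0) ∣ Z=1] = E[Z·μ0(X)·ε0(X)] / e = E[e(X)·ε0(X)·(1−Z)·Y/(1−e(X))] / e; equivalently, E[Z·Y(0)] = E[Z·μ0(X)·ε0(X)] = E[e(X)·ε0(X)·(1−Z)·Y/(1−e(X))]. -/

import Mathlib

/-!
On the event `Z = 1` the observed outcome carries no information about `Y(0)`, so everything
goes through the conditional moment `E[Z·Y(0) ∣ X]`. The sensitivity relation expresses it
through `E[(1-Z)·Y(0) ∣ X] = E[(1-Z)·Y ∣ X] = μ₀(X)(1 - e(X))`, and overlap lets us cancel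
`1 - e(X)`: `E[Z·Y(0) ∣ X] = e(X)·ε₀(X)·μ₀(X)`. Each of the three expectations is then turned into
`E[e(X)·μ₀(X)·ε₀(X)]` by the tower property, pulling the `X`-measurable weights out of the
conditional expectations of `Z` and of `(1-Z)·Y`.
-/

open MeasureTheory ProbabilityTheory

theorem IsIdempotentElem.one_sub_mul_mul_add_one_sub_mul {R : Type*} [CommRing R] {z : R}
    (hz : IsIdempotentElem z) (a b : R) : (1 - z) * (z * a + (1 - z) * b) = (1 - z) * b := by
  have hz' : (1 - z) * z = 0 := by rw [sub_mul, one_mul, hz.eq, sub_self]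
  linear_combination (a - b) * hz'

section

variable {Ω : Type*} {m mΩ : MeasurableSpace Ω} {μ : Measure Ω}

theorem integral_mul_eq_of_condExp_ae_eq (hm : m ≤ mΩ) [SigmaFinite (μ.trim hm)]
    {f g h : Ω → ℝ} (hg : AEStronglyMeasurable[m] g μ)
    (hfg : Integrable (fun ω => f ω * g ω) μ) (hf : Integrable f μ)
    (hfh : μ[f | m] =ᵐ[μ] h) :
    ∫ ω, f ω * g ω ∂μ = ∫ ω, h ω * g ω ∂μ := by
  rw [← integral_condExp hm]
  refine integral_congr_ae ?_
  filter_upwards [condExp_mul_of_aestronglyMeasurable_right hg hfg hf, hfh] with ω hpull hω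
  exact hpull.trans (by rw [Pi.mul_apply, hω])

theorem integral_mul_div_one_sub_eq_of_condExp_ae_eq (hm : m ≤ mΩ) [SigmaFinite (μ.trim hm)]
    {e w f μ₀ : Ω → ℝ} (he : Measurable[m] e) (hw : Measurable[m] w) (hlt : ∀ᵐ ω ∂μ, e ω < 1)
    (hint : Integrable (fun ω => e ω * w ω * f ω / (1 - e ω)) μ) (hf : Integrable f μ)
    (hfμ₀ : μ[f | m] =ᵐ[μ] fun ω => μ₀ ω * (1 - e ω)) :
    ∫ ω, e ω * w ω * f ω / (1 - e ω) ∂μ = ∫ ω, e ω * (μ₀ ω * w ω) ∂μ := calc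
  _ = ∫ ω, f ω * (e ω * w ω / (1 - e ω)) ∂μ := by congr 1 with ω; ring
  _ = ∫ ω, μ₀ ω * (1 - e ω) * (e ω * w ω / (1 - e ω)) ∂μ :=
    integral_mul_eq_of_condExp_ae_eq hm (by fun_prop : Measurable[m] _).aestronglyMeasurable
      (hint.congr (ae_of_all _ fun ω => by ring)) hf hfμ₀
  _ = _ := integral_congr_ae <| hlt.mono fun ω hω => by field_simp [sub_ne_zero.mpr hω.ne']

theorem MeasureTheory.Integrable.mul_of_isIdempotentElem {Z f : Ω → ℝ} (hf : Integrable f μ)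
    (hZ : AEStronglyMeasurable Z μ) (hidem : ∀ ω, IsIdempotentElem (Z ω)) :
    Integrable (fun ω => Z ω * f ω) μ :=
  hf.bdd_mul (c := 1) hZ <| ae_of_all _ fun ω => by
    rcases IsIdempotentElem.iff_eq_zero_or_one.mp (hidem ω) with h | h <;> simp [h]

theorem integral_cond_eq_setIntegral_div (s : Set Ω) (f : Ω → ℝ) :
    ∫ ω, f ω ∂μ[|s] = (∫ ω in s, f ω ∂μ) / (μ s).toReal := by
  rw [ProbabilityTheory.cond, integral_smul_measure, ENNReal.toReal_inv, smul_eq_mul,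
    inv_mul_eq_div]

theorem integral_mul_eq_setIntegral_of_eq_zero_or_eq_one {Z : Ω → ℝ}
    (hs : MeasurableSet {ω | Z ω = 1}) (hZ : ∀ ω, Z ω = 0 ∨ Z ω = 1) (f : Ω → ℝ) :
    ∫ ω, Z ω * f ω ∂μ = ∫ ω in {ω | Z ω = 1}, f ω ∂μ := by
  rw [← integral_indicator hs]
  congr 1 with ω
  rcases hZ ω with h | h <;> simp [Set.indicator, h]

theorem ae_eq_mul_of_one_sub_mul_ae_eq {e ε μ₀ A B : Ω → ℝ}
    (hlt : ∀ᵐ ω ∂μ, e ω < 1) (hAB : ∀ᵐ ω ∂μ, (1 - e ω) * A ω = ε ω * e ω * B ω)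
    (hB : (fun ω => μ₀ ω * (1 - e ω)) =ᵐ[μ] B) :
    A =ᵐ[μ] fun ω => e ω * (μ₀ ω * ε ω) := by
  filter_upwards [hlt, hAB, hB] with ω hlt hAB hB
  refine mul_left_cancel₀ (sub_ne_zero.mpr hlt.ne') (hAB.trans ?_)
  rw [← hB]
  ring

end

theorem att_counterfactual_control_mean_identification
    {Ω : Type*} [F : MeasurableSpace Ω] (P : Measure Ω) [IsProbabilityMeasure P]
    (Z Y1 Y0 Y : Ω → ℝ)
    (hZmeas : Measurable Z) (hZ01 : ∀ ω, Z ω = 0 ∨ Z ω = 1)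
    (hY0int : Integrable Y0 P)
    (hYdef : ∀ ω, Y ω = Z ω * Y1 ω + (1 - Z ω) * Y0 ω)
    (mX : MeasurableSpace Ω) (hmX : mX ≤ F)
    (eX : Ω → ℝ) (heXmeas : Measurable[mX] eX) (heX : eX =ᵐ[P] P[Z|mX])
    (hov : ∀ᵐ ω ∂P, 0 < eX ω ∧ eX ω < 1)
    (mu0 : Ω → ℝ) (hmu0meas : Measurable[mX] mu0)
    (hmu0 : (fun ω => mu0 ω * (1 - eX ω)) =ᵐ[P] P[fun ω => (1 - Z ω) * Y ω|mX])
    (eps0 : Ω → ℝ) (heps0meas : Measurable[mX] eps0)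
    (hsens0 : ∀ᵐ ω ∂P, (1 - eX ω) * (P[fun ω' => Z ω' * Y0 ω'|mX]) ω
        = eps0 ω * eX ω * (P[fun ω' => (1 - Z ω') * Y0 ω'|mX]) ω)
    (hint2 : Integrable (fun ω => Z ω * (mu0 ω * eps0 ω)) P)
    (hint3 : Integrable
      (fun ω => eX ω * eps0 ω * ((1 - Z ω) * Y ω) / (1 - eX ω)) P) :
    (∫ ω, Z ω * Y0 ω ∂P = ∫ ω, Z ω * (mu0 ω * eps0 ω) ∂P)
    ∧ (∫ ω, Z ω * (mu0 ω * eps0 ω) ∂P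
        = ∫ ω, eX ω * eps0 ω * ((1 - Z ω) * Y ω) / (1 - eX ω) ∂P)
    ∧ (∫ ω, Y0 ω ∂(ProbabilityTheory.cond P {ω | Z ω = 1})
        = (∫ ω, Z ω * (mu0 ω * eps0 ω) ∂P) / (P {ω | Z ω = 1}).toReal) := by
  have : IsFiniteMeasure (P.trim hmX) := isFiniteMeasure_trim hmX
  have hZidem ω : IsIdempotentElem (Z ω) := IsIdempotentElem.iff_eq_zero_or_one.mpr (hZ01 ω)
  have hcontrol : (fun ω => (1 - Z ω) * Y ω) = fun ω => (1 - Z ω) * Y0 ω := funext fun ω => by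
    rw [hYdef, (hZidem ω).one_sub_mul_mul_add_one_sub_mul]
  have hZint : Integrable Z P := by
    simpa using (integrable_const (1 : ℝ)).mul_of_isIdempotentElem (by fun_prop) hZidem
  have hcontrol_int : Integrable (fun ω => (1 - Z ω) * Y ω) P :=
    hcontrol ▸ hY0int.mul_of_isIdempotentElem (by fun_prop) fun ω => (hZidem ω).one_sub
  have htreated : P[fun ω => Z ω * Y0 ω|mX] =ᵐ[P] fun ω => eX ω * (mu0 ω * eps0 ω) :=
    ae_eq_mul_of_one_sub_mul_ae_eq (hov.mono fun _ => And.right) hsens0 (hcontrol ▸ hmu0)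
  have e1 : ∫ ω, Z ω * Y0 ω ∂P = ∫ ω, eX ω * (mu0 ω * eps0 ω) ∂P := by
    rw [← integral_condExp hmX]
    exact integral_congr_ae htreated
  have e2 : ∫ ω, Z ω * (mu0 ω * eps0 ω) ∂P = ∫ ω, eX ω * (mu0 ω * eps0 ω) ∂P :=
    integral_mul_eq_of_condExp_ae_eq hmX (hmu0meas.mul heps0meas).aestronglyMeasurable hint2
      hZint heX.symm
  have e3 : ∫ ω, eX ω * eps0 ω * ((1 - Z ω) * Y ω) / (1 - eX ω) ∂P
      = ∫ ω, eX ω * (mu0 ω * eps0 ω) ∂P :=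
    integral_mul_div_one_sub_eq_of_condExp_ae_eq hmX heXmeas heps0meas
      (hov.mono fun _ => And.right) hint3 hcontrol_int hmu0.symm
  have hs : MeasurableSet[F] {ω | Z ω = 1} := hZmeas (measurableSet_singleton 1)
  refine ⟨e1.trans e2.symm, e2.trans e3.symm, ?_⟩
  rw [integral_cond_eq_setIntegral_div,
    ← integral_mul_eq_setIntegral_of_eq_zero_or_eq_one hs hZ01, e1, e2]
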